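/- Pre-bisimilarity does not imply ATL*-equivalence: there exist finite two-agent iCGS G7, G8, states q ∈ G7 and q' ∈ G8, and a pre-bisimulation ⪅ with q ⪅ q', such that (G7, q) ⊨_subj ¬⟨⟨Ag⟩⟩ F p while (G8, q') ⊨_subj ⟨⟨Ag⟩⟩ F p. -/

import Mathlib

/-- An imperfect-information concurrent game structure (iCGS), given as raw data;
the defining axioms are collected in `iCGS.Valid`. -/
structure iCGS (Ag AP S Act : Type) where
  init : S
  indist : Ag → S → S → Prop
  protocol : Ag → S → Set Act
  trans : S → (Ag → Act) → S → Prop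
  label : S → Set AP

namespace iCGS

variable {Ag AP S S' Act Act' : Type}

/-- The axioms of an iCGS. -/
def Valid (G : iCGS Ag AP S Act) : Prop :=
  (∀ i, Equivalence (G.indist i)) ∧
  (∀ i s, (G.protocol i s).Nonempty) ∧
  (∀ i s s', G.indist i s s' → G.protocol i s = G.protocol i s') ∧
  (∀ s a, (∃ s', G.trans s a s') ↔ ∀ i, a i ∈ G.protocol i s)

/-- Common-knowledge reachability for coalition `A`:
reflexive-transitive closure of the union of the `∼ᵢ`, `i ∈ A`. -/
def ck (G : iCGS Ag AP S Act) (A : Set Ag) : S → S → Prop :=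
  Relation.ReflTransGen (fun s s' => ∃ i ∈ A, G.indist i s s')

/-- Common-knowledge neighbourhood `C_A(q)`. -/
def CKN (G : iCGS Ag AP S Act) (A : Set Ag) (q : S) : Set S := {r | G.ck A q r}

/-- "Everybody knows" neighbourhood `E_A(q)`. -/
def EKN (G : iCGS Ag AP S Act) (A : Set Ag) (q : S) : Set S :=
  {r | ∃ i ∈ A, G.indist i q r}

/-- `σ` is a partial uniform strategy for coalition `A` with domain `Q`. -/
def IsPStrat (G : iCGS Ag AP S Act) (A : Set Ag) (Q : Set S) (σ : Ag → S → Act) : Prop :=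
  (∀ i ∈ A, ∀ s ∈ Q, σ i s ∈ G.protocol i s) ∧
  (∀ i ∈ A, ∀ s ∈ Q, ∀ t ∈ Q, G.indist i s t → σ i s = σ i t)

/-- `σ` is a (total) uniform memoryless strategy for coalition `A`. -/
def IsStrat (G : iCGS Ag AP S Act) (A : Set Ag) (σ : Ag → S → Act) : Prop :=
  G.IsPStrat A Set.univ σ

/-- Successors of `s` under joint actions compatible with `σ` on coalition `A`. -/
def succ (G : iCGS Ag AP S Act) (A : Set Ag) (σ : Ag → S → Act) (s : S) : Set S :=
  {t | ∃ a : Ag → Act, (∀ i ∈ A, a i = σ i s) ∧ G.trans s a t}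

/-- Objective outcome set of strategy `σ` at `q` (runs as infinite state sequences). -/
def OutObj (G : iCGS Ag AP S Act) (A : Set Ag) (σ : Ag → S → Act) (q : S) :
    Set (ℕ → S) :=
  {lam | lam 0 = q ∧ ∀ j, lam (j + 1) ∈ G.succ A σ (lam j)}

/-- Subjective outcome set: union of objective outcomes over states indistinguishable
from `q` for some member of the coalition. -/
def OutSubj (G : iCGS Ag AP S Act) (A : Set Ag) (σ : Ag → S → Act) (q : S) :
    Set (ℕ → S) :=
  {lam | ∃ i ∈ A, ∃ r, G.indist i q r ∧ lam ∈ G.OutObj A σ r}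

/-- Outcome set: subjective (`x = true`) or objective (`x = false`).
(For a nonempty coalition the subjective case coincides with the union of
objective outcomes over indistinguishable states, by reflexivity; for the
empty coalition it degenerates to the objective case.) -/
def Out (G : iCGS Ag AP S Act) (x : Bool) (A : Set Ag) (σ : Ag → S → Act) (q : S) :
    Set (ℕ → S) :=
  if x then G.OutObj A σ q ∪ G.OutSubj A σ q else G.OutObj A σ q

/-- `R` is a simulation for coalition `A` from `G` to `G'` (Def. of simulation):
existence of a strategy simulator over common-knowledge neighbourhoods with
(a) atom agreement, (b) epistemic back-condition, (c) strategy transfer, and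
(2) injectivity modulo common-knowledge neighbourhoods. -/
def IsSimulation (G : iCGS Ag AP S Act) (G' : iCGS Ag AP S' Act') (A : Set Ag)
    (R : S → S' → Prop) : Prop :=
  (∃ ST : Set S → Set S' → (Ag → S → Act) → (Ag → S' → Act'),
    ∀ q q', R q q' →
      (∀ σ, G.IsPStrat A (G.CKN A q) σ →
        G'.IsPStrat A (G'.CKN A q') (ST (G.CKN A q) (G'.CKN A q') σ)) ∧
      (∀ r ∈ G.CKN A q, ∀ r' ∈ G'.CKN A q', R r r' →
        ∀ σ, G.IsPStrat A (G.CKN A q) σ →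
          ∀ s' ∈ G'.succ A (ST (G.CKN A q) (G'.CKN A q') σ) r',
            ∃ s ∈ G.succ A σ r, R s s')) ∧
  (∀ q q', R q q' → G.label q = G'.label q') ∧
  (∀ q q', R q q' → ∀ i ∈ A, ∀ r', G'.indist i q' r' →
    ∃ r, G.indist i q r ∧ R r r') ∧
  (∀ q₁ q₂ q', R q₁ q' → R q₂ q' → G.CKN A q₁ = G.CKN A q₂)

/-- `R` is a bisimulation for `A` iff both `R` and its converse are `A`-simulations. -/
def IsBisimulation (G : iCGS Ag AP S Act) (G' : iCGS Ag AP S' Act') (A : Set Ag)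
    (R : S → S' → Prop) : Prop :=
  G.IsSimulation G' A R ∧ G'.IsSimulation G A (fun q' q => R q q')

end iCGS
mutual
/-- State formulas of ATL*. -/
inductive SF (AP Ag : Type) : Type where
  | atom : AP → SF AP Ag
  | neg : SF AP Ag → SF AP Ag
  | imp : SF AP Ag → SF AP Ag → SF AP Ag
  | coal : Set Ag → PF AP Ag → SF AP Ag
/-- Path formulas of ATL*. -/
inductive PF (AP Ag : Type) : Type where
  | of : SF AP Ag → PF AP Ag
  | neg : PF AP Ag → PF AP Ag
  | imp : PF AP Ag → PF AP Ag → PF AP Ag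
  | next : PF AP Ag → PF AP Ag
  | untl : PF AP Ag → PF AP Ag → PF AP Ag
end

variable {Ag AP S Act : Type}

mutual
/-- Satisfaction of ATL* state formulas; `x = true` is the subjective,
`x = false` the objective imperfect-information memoryless semantics. -/
def SSat (G : iCGS Ag AP S Act) (x : Bool) : S → SF AP Ag → Prop
  | s, .atom p => p ∈ G.label s
  | s, .neg φ => ¬ SSat G x s φ
  | s, .imp φ ψ => SSat G x s φ → SSat G x s ψ
  | s, .coal A ψ =>
      ∃ σ, G.IsStrat A σ ∧ ∀ lam ∈ G.Out x A σ s, PSat G x lam ψ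
/-- Satisfaction of ATL* path formulas on runs. -/
def PSat (G : iCGS Ag AP S Act) (x : Bool) : (ℕ → S) → PF AP Ag → Prop
  | lam, .of φ => SSat G x (lam 0) φ
  | lam, .neg ψ => ¬ PSat G x lam ψ
  | lam, .imp ψ χ => PSat G x lam ψ → PSat G x lam χ
  | lam, .next ψ => PSat G x (fun n => lam (n + 1)) ψ
  | lam, .untl ψ χ => ∃ j, PSat G x (fun n => lam (n + j)) χ ∧
      ∀ k < j, PSat G x (fun n => lam (n + k)) ψ
end

mutual
/-- `φ` is an `A`-formula: `A` is the only coalition occurring in it. -/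
def SOnly (A : Set Ag) : SF AP Ag → Prop
  | .atom _ => True
  | .neg φ => SOnly A φ
  | .imp φ ψ => SOnly A φ ∧ SOnly A ψ
  | .coal B ψ => B = A ∧ POnly A ψ
def POnly (A : Set Ag) : PF AP Ag → Prop
  | .of φ => SOnly A φ
  | .neg ψ => POnly A ψ
  | .imp ψ χ => POnly A ψ ∧ POnly A χ
  | .next ψ => POnly A ψ
  | .untl ψ χ => POnly A ψ ∧ POnly A χ
end

namespace iCGS
variable {Ag AP S S' Act Act' : Type}

/-- Pre-simulation: like a simulation but over "everybody knows" neighbourhoods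
`E_A` instead of common-knowledge neighbourhoods, and without the injectivity
condition (2). -/
def IsPreSimulation (G : iCGS Ag AP S Act) (G' : iCGS Ag AP S' Act') (A : Set Ag)
    (R : S → S' → Prop) : Prop :=
  (∃ ST : Set S → Set S' → (Ag → S → Act) → (Ag → S' → Act'),
    ∀ q q', R q q' →
      (∀ σ, G.IsPStrat A (G.EKN A q) σ →
        G'.IsPStrat A (G'.EKN A q') (ST (G.EKN A q) (G'.EKN A q') σ)) ∧
      (∀ r ∈ G.EKN A q, ∀ r' ∈ G'.EKN A q', R r r' →
        ∀ σ, G.IsPStrat A (G.EKN A q) σ →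
          ∀ s' ∈ G'.succ A (ST (G.EKN A q) (G'.EKN A q') σ) r',
            ∃ s ∈ G.succ A σ r, R s s')) ∧
  (∀ q q', R q q' → G.label q = G'.label q') ∧
  (∀ q q', R q q' → ∀ i ∈ A, ∀ r', G'.indist i q' r' →
    ∃ r, G.indist i q r ∧ R r r')

/-- Pre-bisimulation: `R` and its converse are pre-simulations. -/
def IsPreBisimulation (G : iCGS Ag AP S Act) (G' : iCGS Ag AP S' Act') (A : Set Ag)
    (R : S → S' → Prop) : Prop :=
  G.IsPreSimulation G' A R ∧ G'.IsPreSimulation G A (fun q' q => R q q')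

end iCGS

/-- `F p` as the ATL* path formula `⊤ U p` over a single atom. -/
def Fp : PF Unit (Fin 2) :=
  PF.untl (PF.imp (PF.of (SF.atom ())) (PF.of (SF.atom ()))) (PF.of (SF.atom ()))

/-! The game `G₈` unfolds `G₇`: the pair of choice states `qa, qb`, which agent 1 cannot tell
apart, is duplicated, the initial state `a` leading into the first copy and `b` into the second.
The projection `G₈ → G₇` is a bounded morphism for transitions and indistinguishability that is
injective on every "everybody knows" neighbourhood; pre-bisimulations look no further than such
neighbourhoods, so its graph is a pre-bisimulation. But a uniform strategy in `G₇` plays the same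
at `qa` and `qb`, so from one of the indistinguishable initial states `a, b` the play ends in
`bot`, whereas in `G₈` the two copies can be played differently and both initial states reach
`top` in two steps. -/

namespace iCGS

variable {Ag AP S S' Act : Type}

/-- `h : S' → S` is a bounded morphism for the transitions and for each `∼ᵢ`, `i ∈ A`, which is
injective and reflects `∼ᵢ` on every neighbourhood `E_A(q)` of `G'`. -/
structure IsEKNCover (G : iCGS Ag AP S Act) (G' : iCGS Ag AP S' Act) (A : Set Ag)
    (h : S' → S) : Prop where
  label_eq : ∀ s, G.label (h s) = G'.label s
  protocol_eq : ∀ i s, G.protocol i (h s) = G'.protocol i s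
  trans_iff : ∀ r a t, G.trans (h r) a t ↔ ∃ s, G'.trans r a s ∧ h s = t
  indist_iff : ∀ i ∈ A, ∀ q r, G.indist i (h q) r ↔ ∃ r', G'.indist i q r' ∧ h r' = r
  injOn_EKN : ∀ q, Set.InjOn h (G'.EKN A q)
  indist_of_indist_map : ∀ q, ∀ i ∈ A, ∀ s ∈ G'.EKN A q, ∀ t ∈ G'.EKN A q,
    G.indist i (h s) (h t) → G'.indist i s t

namespace IsEKNCover

variable {G : iCGS Ag AP S Act} {G' : iCGS Ag AP S' Act} {A : Set Ag} {h : S' → S}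

theorem indist_map (hh : G.IsEKNCover G' A h) {i : Ag} (hi : i ∈ A) {s t : S'}
    (hst : G'.indist i s t) : G.indist i (h s) (h t) :=
  (hh.indist_iff i hi s (h t)).2 ⟨t, hst, rfl⟩

theorem mapsTo_EKN (hh : G.IsEKNCover G' A h) (q : S') :
    Set.MapsTo h (G'.EKN A q) (G.EKN A (h q)) :=
  fun _ ⟨i, hi, hqs⟩ => ⟨i, hi, hh.indist_map hi hqs⟩

theorem surjOn_EKN (hh : G.IsEKNCover G' A h) (q : S') :
    Set.SurjOn h (G'.EKN A q) (G.EKN A (h q)) := by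
  rintro s ⟨i, hi, hqs⟩
  obtain ⟨r, hqr, rfl⟩ := (hh.indist_iff i hi q s).1 hqs
  exact ⟨r, ⟨i, hi, hqr⟩, rfl⟩

theorem isPreSimulation (hh : G.IsEKNCover G' A h) :
    G.IsPreSimulation G' A (fun q q' => h q' = q) := by
  refine ⟨⟨fun _ _ σ i s => σ i (h s), ?_⟩, ?_, ?_⟩
  · rintro _ q rfl
    have hmaps := hh.mapsTo_EKN q
    refine ⟨fun σ hσ => ⟨fun i hi s hs => ?_, fun i hi s hs t ht hst => ?_⟩, ?_⟩
    · rw [← hh.protocol_eq]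
      exact hσ.1 i hi _ (hmaps hs)
    · exact hσ.2 i hi _ (hmaps hs) _ (hmaps ht) (hh.indist_map hi hst)
    · rintro _ - r - rfl σ - s ⟨a, ha, hras⟩
      exact ⟨h s, ⟨a, ha, (hh.trans_iff r a _).2 ⟨s, hras, rfl⟩⟩, rfl⟩
  · rintro _ q rfl
    exact hh.label_eq q
  · rintro _ q rfl i hi r hqr
    exact ⟨h r, hh.indist_map hi hqr, rfl⟩

/-- Strategies are pulled back along the inverse of `h` on `E_A(q')`, which only depends on
the set `E_A(q')` itself, as a strategy simulator requires. -/
theorem isPreSimulation_symm [Nonempty S'] (hh : G.IsEKNCover G' A h) :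
    G'.IsPreSimulation G A (fun q' q => h q' = q) := by
  refine ⟨⟨fun E' _ τ i s => τ i (Function.invFunOn h E' s), ?_⟩, ?_, ?_⟩
  · rintro q _ rfl
    have hmaps := (hh.surjOn_EKN q).mapsTo_invFunOn
    have hright := (hh.surjOn_EKN q).rightInvOn_invFunOn
    have hleft := (hh.injOn_EKN q).leftInvOn_invFunOn
    refine ⟨fun τ hτ => ⟨fun i hi s hs => ?_, fun i hi s hs t ht hst => ?_⟩, ?_⟩
    · have := hτ.1 i hi _ (hmaps hs)
      rwa [← hh.protocol_eq, hright hs] at this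
    · refine hτ.2 i hi _ (hmaps hs) _ (hmaps ht) ?_
      refine hh.indist_of_indist_map q i hi _ (hmaps hs) _ (hmaps ht) ?_
      rwa [hright hs, hright ht]
    · rintro r hr _ - rfl τ - s ⟨a, ha, hras⟩
      obtain ⟨s', hs', rfl⟩ := (hh.trans_iff r a s).1 hras
      refine ⟨s', ⟨a, fun i hi => ?_, hs'⟩, rfl⟩
      rw [ha i hi]
      exact congrArg (τ i) (hleft hr)
  · rintro q _ rfl
    exact (hh.label_eq q).symm
  · rintro q _ rfl i hi r hqr
    exact (hh.indist_iff i hi q r).1 hqr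

theorem isPreBisimulation [Nonempty S'] (hh : G.IsEKNCover G' A h) :
    G.IsPreBisimulation G' A (fun q q' => h q' = q) :=
  ⟨hh.isPreSimulation, hh.isPreSimulation_symm⟩

end IsEKNCover

def ofObs {O : Type} (init : S) (obs : Ag → S → O) (δ : S → (Ag → Act) → S)
    (label : S → Set AP) : iCGS Ag AP S Act where
  init := init
  indist i s t := obs i s = obs i t
  protocol _ _ := Set.univ
  trans s a t := t = δ s a
  label := label

def play (δ : S → (Ag → Act) → S) (σ : Ag → S → Act) (r : S) (n : ℕ) : S :=
  (fun s => δ s fun i => σ i s)^[n] r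

theorem play_add (δ : S → (Ag → Act) → S) (σ : Ag → S → Act) (r : S) (m n : ℕ) :
    play δ σ r (n + m) = play δ σ (play δ σ r m) n :=
  Function.iterate_add_apply _ n m r

theorem play_of_isFixedPt {δ : S → (Ag → Act) → S} {σ : Ag → S → Act} {s : S}
    (hs : δ s (fun i => σ i s) = s) (n : ℕ) : play δ σ s n = s :=
  Function.iterate_fixed hs n

section ofObs

variable {O O' : Type} {init : S} {obs : Ag → S → O} {δ : S → (Ag → Act) → S}
  {label : S → Set AP}

theorem valid_ofObs [Nonempty Act] : (ofObs init obs δ label).Valid :=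
  ⟨fun _ => ⟨fun _ => rfl, Eq.symm, Eq.trans⟩, fun _ _ => Set.univ_nonempty,
    fun _ _ _ _ => rfl, fun s a => ⟨fun _ _ => trivial, fun _ => ⟨δ s a, rfl⟩⟩⟩

theorem isStrat_ofObs_iff {A : Set Ag} {σ : Ag → S → Act} :
    (ofObs init obs δ label).IsStrat A σ ↔ ∀ i ∈ A, ∀ s t, obs i s = obs i t → σ i s = σ i t :=
  ⟨fun hσ i hi s t hst => hσ.2 i hi s trivial t trivial hst,
    fun hσ => ⟨fun _ _ _ _ => trivial, fun i hi s _ t _ hst => hσ i hi s t hst⟩⟩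

theorem mem_outObj_ofObs_univ_iff {σ : Ag → S → Act} {r : S} {lam : ℕ → S} :
    lam ∈ (ofObs init obs δ label).OutObj Set.univ σ r ↔ lam = play δ σ r := by
  constructor
  · rintro ⟨h0, hstep⟩
    funext n
    induction n with
    | zero => exact h0
    | succ n ih =>
      obtain ⟨a, ha, hlam⟩ := hstep n
      have ha' : a = fun i => σ i (lam n) := funext fun i => ha i trivial
      rw [hlam, ha', ih]
      exact (Function.iterate_succ_apply' (fun s => δ s fun i => σ i s) n r).symm
  · rintro rfl
    refine ⟨rfl, fun n => ⟨fun i => σ i (play δ σ r n), fun _ _ => rfl, ?_⟩⟩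
    exact Function.iterate_succ_apply' _ n r

theorem forall_mem_out_ofObs_univ_iff [Nonempty Ag] {σ : Ag → S → Act} {q : S}
    {P : (ℕ → S) → Prop} :
    (∀ lam ∈ (ofObs init obs δ label).Out true Set.univ σ q, P lam) ↔
      ∀ r, (∃ i, obs i q = obs i r) → P (play δ σ r) := by
  simp only [Out, if_true, OutSubj, Set.mem_union, Set.mem_ofPred_eq, Set.mem_univ, true_and,
    mem_outObj_ofObs_univ_iff]
  refine ⟨fun hP r ⟨i, hi⟩ => hP _ (Or.inr ⟨i, r, hi, rfl⟩), ?_⟩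
  rintro hP _ (rfl | ⟨i, r, hi, rfl⟩)
  · exact hP q ⟨Classical.arbitrary Ag, rfl⟩
  · exact hP r ⟨i, hi⟩

theorem mem_EKN_ofObs_univ_iff {q r : S} :
    r ∈ (ofObs init obs δ label).EKN Set.univ q ↔ ∃ i, obs i q = obs i r := by
  simp [EKN, ofObs]

theorem isEKNCover_ofObs {init' : S'} {obs' : Ag → S' → O'}
    {δ' : S' → (Ag → Act) → S'} {label' : S' → Set AP} {h : S' → S}
    (hδ : ∀ r a, δ (h r) a = h (δ' r a)) (hlabel : ∀ s, label (h s) = label' s)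
    (hobs : ∀ i q r, obs i (h q) = obs i r ↔ ∃ r', obs' i q = obs' i r' ∧ h r' = r)
    (hinj : ∀ q s t, (∃ i, obs' i q = obs' i s) → (∃ i, obs' i q = obs' i t) →
      h s = h t → s = t)
    (hreflect : ∀ q i s t, (∃ j, obs' j q = obs' j s) → (∃ j, obs' j q = obs' j t) →
      obs i (h s) = obs i (h t) → obs' i s = obs' i t) :
    (ofObs init obs δ label).IsEKNCover (ofObs init' obs' δ' label') Set.univ h where
  label_eq := hlabel
  protocol_eq _ _ := rfl
  trans_iff r a t := by
    simp only [ofObs, hδ]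
    exact ⟨fun ht => ⟨_, rfl, ht.symm⟩, fun ⟨_, hs, ht⟩ => hs ▸ ht.symm⟩
  indist_iff i _ := hobs i
  injOn_EKN q s hs t ht :=
    hinj q s t (mem_EKN_ofObs_univ_iff.1 hs) (mem_EKN_ofObs_univ_iff.1 ht)
  indist_of_indist_map q i _ s hs t ht :=
    hreflect q i s t (mem_EKN_ofObs_univ_iff.1 hs) (mem_EKN_ofObs_univ_iff.1 ht)

end ofObs

end iCGS

theorem pSat_Fp_iff {S Act : Type} (G : iCGS (Fin 2) Unit S Act) (x : Bool) (lam : ℕ → S) :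
    PSat G x lam Fp ↔ ∃ n, () ∈ G.label (lam n) := by
  simp [Fp, PSat, SSat]

open iCGS in
theorem sSat_ofObs_coal_univ_Fp_iff {S Act O : Type} {init : S} {obs : Fin 2 → S → O}
    {δ : S → (Fin 2 → Act) → S} {label : S → Set Unit} {q : S} :
    SSat (ofObs init obs δ label) true q (SF.coal Set.univ Fp) ↔
      ∃ σ : Fin 2 → S → Act, (∀ i s t, obs i s = obs i t → σ i s = σ i t) ∧
        ∀ r, (∃ i, obs i q = obs i r) → ∃ n, () ∈ label (play δ σ r n) := by
  simp only [SSat, isStrat_ofObs_iff, Set.mem_univ, true_imp_iff, forall_mem_out_ofObs_univ_iff,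
    pSat_Fp_iff]
  rfl

namespace PreBisimCounterexample

open iCGS

inductive S₇ : Type
  | a | b | qa | qb | top | bot
  deriving DecidableEq

instance : Fintype S₇ :=
  ⟨{.a, .b, .qa, .qb, .top, .bot}, fun s => by cases s <;> decide⟩

inductive S₈ : Type
  | a | b | qa₁ | qb₁ | qa₂ | qb₂ | top | bot
  deriving DecidableEq, Inhabited

instance : Fintype S₈ :=
  ⟨{.a, .b, .qa₁, .qb₁, .qa₂, .qb₂, .top, .bot}, fun s => by cases s <;> decide⟩

def blur₇ : S₇ → S₇
  | .b => .a
  | .qb => .qa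
  | s => s

def blur₈ : S₈ → S₈
  | .b => .a
  | .qb₁ => .qa₁
  | .qb₂ => .qa₂
  | s => s

def obs₇ : Fin 2 → S₇ → S₇ := ![id, blur₇]

def obs₈ : Fin 2 → S₈ → S₈ := ![id, blur₈]

def step₇ : S₇ → Bool → S₇
  | .a, _ => .qa
  | .b, _ => .qb
  | .qa, x => if x then .top else .bot
  | .qb, x => if x then .bot else .top
  | .top, _ => .top
  | .bot, _ => .bot

def step₈ : S₈ → Bool → S₈
  | .a, _ => .qa₁
  | .b, _ => .qb₂
  | .qa₁, x | .qa₂, x => if x then .top else .bot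
  | .qb₁, x | .qb₂, x => if x then .bot else .top
  | .top, _ => .top
  | .bot, _ => .bot

def δ₇ (s : S₇) (a : Fin 2 → Bool) : S₇ := step₇ s (a 1)

def δ₈ (s : S₈) (a : Fin 2 → Bool) : S₈ := step₈ s (a 1)

def G₇ : iCGS (Fin 2) Unit S₇ Bool := ofObs .a obs₇ δ₇ fun s => {_u | s = .top}

def G₈ : iCGS (Fin 2) Unit S₈ Bool := ofObs .a obs₈ δ₈ fun s => {_u | s = .top}

def proj : S₈ → S₇
  | .a => .a
  | .b => .b
  | .qa₁ | .qa₂ => .qa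
  | .qb₁ | .qb₂ => .qb
  | .top => .top
  | .bot => .bot

theorem isEKNCover_proj : G₇.IsEKNCover G₈ Set.univ proj := by
  have hstep : ∀ r x, step₇ (proj r) x = proj (step₈ r x) := by decide
  have hlabel : ∀ s, proj s = .top ↔ s = .top := by decide
  refine isEKNCover_ofObs (fun r a => hstep r (a 1)) (fun s => ?_) (by decide) (by decide)
    (by decide)
  simp only [hlabel]

theorem play₇_ne_top {σ : Fin 2 → S₇ → Bool} {r : S₇} (hr : r = .a ∨ r = .b)
    (h₂ : play δ₇ σ r 2 = .bot) : ∀ n, play δ₇ σ r n ≠ .top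
  | 0 => by rcases hr with rfl | rfl <;> nofun
  | 1 => by rcases hr with rfl | rfl <;> nofun
  | n + 2 => by rw [play_add, h₂, play_of_isFixedPt rfl]; decide

theorem not_sSat_G₇ : ¬ SSat G₇ true .a (SF.coal Set.univ Fp) := by
  rw [G₇, sSat_ofObs_coal_univ_Fp_iff]
  rintro ⟨σ, hσ, hwin⟩
  have hunif : σ 1 .qa = σ 1 .qb := hσ 1 .qa .qb rfl
  obtain ⟨r, hr, hobs, hbot⟩ : ∃ r, (r = .a ∨ r = .b) ∧ (∃ i, obs₇ i .a = obs₇ i r) ∧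
      play δ₇ σ r 2 = .bot := by
    cases hx : σ 1 .qa
    · exact ⟨.a, .inl rfl, ⟨0, rfl⟩, by simp [play, δ₇, step₇, hx]⟩
    · exact ⟨.b, .inr rfl, ⟨1, rfl⟩, by simp [play, δ₇, step₇, ← hunif, hx]⟩
  obtain ⟨n, hn⟩ := hwin r hobs
  exact play₇_ne_top hr hbot n hn

def σ₈ (_ : Fin 2) : S₈ → Bool
  | .qa₂ | .qb₂ => false
  | _ => true

theorem sSat_G₈ : SSat G₈ true .a (SF.coal Set.univ Fp) := by
  rw [G₈, sSat_ofObs_coal_univ_Fp_iff]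
  have hunif : ∀ i s t, obs₈ i s = obs₈ i t → σ₈ i s = σ₈ i t := by decide
  have hwin : ∀ r, (∃ i, obs₈ i .a = obs₈ i r) → play δ₈ σ₈ r 2 = .top := by decide
  exact ⟨σ₈, hunif, fun r hr => ⟨2, hwin r hr⟩⟩

end PreBisimCounterexample

/-- pre-bisimilarity does not imply ATL*-equivalence: there are
finite two-agent iCGS, pre-bisimilar states `q ⪅ q'`, with
`(G₇,q) ⊨_subj ¬⟨⟨Ag⟩⟩F p` but `(G₈,q') ⊨_subj ⟨⟨Ag⟩⟩F p`. -/
theorem prebisimulation_does_not_preserve :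
    ∃ (S₇ S₈ Act₇ Act₈ : Type) (_ : Fintype S₇) (_ : Fintype S₈)
      (_ : Fintype Act₇) (_ : Fintype Act₈)
      (G₇ : iCGS (Fin 2) Unit S₇ Act₇) (G₈ : iCGS (Fin 2) Unit S₈ Act₈)
      (q : S₇) (q' : S₈) (R : S₇ → S₈ → Prop),
      G₇.Valid ∧ G₈.Valid ∧
      G₇.IsPreBisimulation G₈ Set.univ R ∧ R q q' ∧
      SSat G₇ true q (SF.neg (SF.coal Set.univ Fp)) ∧
      SSat G₈ true q' (SF.coal Set.univ Fp) :=
  open PreBisimCounterexample in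
  ⟨S₇, S₈, Bool, Bool, inferInstance, inferInstance, inferInstance, inferInstance, G₇, G₈, .a, .a,
    fun q q' => proj q' = q, iCGS.valid_ofObs, iCGS.valid_ofObs,
    isEKNCover_proj.isPreBisimulation, rfl, not_sSat_G₇, sSat_G₈⟩
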